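/- arXiv:1310.5634 — 2 statements merged into one kernel-verified Lean document; each statement's English description precedes it below -/
import Mathlib

section
/- Let n be a positive even integer and let B be any n×n matrix all of whose entries are 0 or 1. Then per(B) · per(J_n − B) ≤ ((n/2)!)⁴, where J_n is the n×n all-ones matrix. Consequently, the maximum number of directed 2-factors of a bipartite tournament obtained by orienting the edges of K_{n,n} equals ((n/2)!)⁴. -/
/-!
Write `h r = log (r!) / r`. By Bregman's theorem (in Schrijver's proof: Jensen's inequality
for `x log x` and induction on minors), a (0,1)-matrix with row sums `r_a` has permanent at
most `∏ (r_a!)^(1/r_a)`, i.e. `log per ≤ ∑ h (r_a)`. Row `a` of `B` and of `J - B` have sums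
`r` and `2m - r`, and `h` is concave on `r ≥ 1`, so the two rows together contribute at most
`2 h m`; summing over the `2m` rows gives `per B · per (J - B) ≤ (m!)^4`. Equality holds for
the block-diagonal matrix `J_m ⊕ J_m`, whose complement is a column permutation of it.
-/

open Nat Matrix

/-- The permanent of a square integer matrix. -/
def perm {n : ℕ} (M : Matrix (Fin n) (Fin n) ℤ) : ℤ :=
  ∑ σ : Equiv.Perm (Fin n), ∏ i, M i (σ i)

/-- The `n×n` all-ones matrix. -/
def Jmat (n : ℕ) : Matrix (Fin n) (Fin n) ℤ :=
  Matrix.of fun _ _ => 1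

open Finset

noncomputable def logRootFact (r : ℕ) : ℝ := Real.log r ! / r

lemma natCast_mul_logRootFact (r : ℕ) : r * logRootFact r = Real.log r ! := by
  rcases r.eq_zero_or_pos with rfl | hr
  · simp [logRootFact]
  · exact mul_div_cancel₀ _ (by positivity)

lemma logRootFact_nonneg (r : ℕ) : 0 ≤ logRootFact r :=
  div_nonneg (Real.log_nonneg (mod_cast r.factorial_pos)) r.cast_nonneg

lemma log_factorial_succ (r : ℕ) : Real.log (r + 1)! = Real.log (r + 1) + Real.log r ! := by
  rw [Nat.factorial_succ, Nat.cast_mul, Real.log_mul (by positivity) (by positivity)]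
  push_cast; rfl

lemma mul_log_succ_sub_log_le {r : ℝ} (hr : 0 < r) :
    r * (Real.log (r + 1) - Real.log r) ≤ 1 := by
  have := Real.log_le_sub_one_of_pos (show 0 < (r + 1) / r by positivity)
  rw [Real.log_div (by positivity) hr.ne', div_sub_one hr.ne', add_sub_cancel_left] at this
  rwa [← le_div_iff₀' hr]

lemma one_le_mul_log_succ_sub_log {r : ℝ} (hr : 0 < r) :
    1 ≤ (r + 1) * (Real.log (r + 1) - Real.log r) := by
  have := Real.log_le_sub_one_of_pos (show 0 < r / (r + 1) by positivity)
  rw [Real.log_div hr.ne' (by positivity), div_sub_one (by positivity), sub_add_cancel_left,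
    neg_div] at this
  rw [← div_le_iff₀' (by positivity)]
  linarith

lemma two_mul_log_factorial_le {r : ℕ} (hr : 1 ≤ r) :
    2 * Real.log r ! ≤ 2 * r * Real.log r - (r - 1) := by
  induction r, hr using Nat.le_induction with
  | base => simp
  | succ r hr ih =>
    have hr' : (1 : ℝ) ≤ r := by exact_mod_cast hr
    have hstep := one_le_mul_log_succ_sub_log (r := r) (by positivity)
    have hmono : Real.log r ≤ Real.log (r + 1) := Real.log_le_log (by positivity) (by linarith)
    rw [log_factorial_succ]
    push_cast
    nlinarith [mul_nonneg (sub_nonneg.mpr hr') (sub_nonneg.mpr hmono)]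

lemma logRootFact_add_two_add_logRootFact_le {s : ℕ} (hs : 1 ≤ s) :
    logRootFact (s + 2) + logRootFact s ≤ 2 * logRootFact (s + 1) := by
  have hfact := two_mul_log_factorial_le (r := s + 1) (by omega)
  have hs' : (0 : ℝ) ≤ s := s.cast_nonneg
  have hlog := mul_log_succ_sub_log_le (r := s + 1) (by positivity)
  have hsucc := log_factorial_succ (s + 1)
  have hpred := log_factorial_succ s
  simp only [logRootFact]
  rw [hsucc, hpred]
  rw [hpred] at hfact
  push_cast at hfact hlog ⊢
  rw [div_add_div _ _ (by positivity) (by positivity), div_le_iff₀ (by positivity)]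
  field_simp
  nlinarith [mul_nonneg hs' (sub_nonneg.mpr hlog)]

lemma antitoneOn_logRootFact_succ_sub :
    AntitoneOn (fun r => logRootFact (r + 1) - logRootFact r) (Set.Ici 1) :=
  antitoneOn_nat_Ici_of_succ_le fun s hs => by
    linarith [logRootFact_add_two_add_logRootFact_le hs]

lemma logRootFact_add_logRootFact_le {r s m : ℕ} (hr : 1 ≤ r) (hs : 1 ≤ s)
    (hrs : r + s = m + m) :
    logRootFact r + logRootFact s ≤ 2 * logRootFact m := by
  wlog hrm : r ≤ m generalizing r s
  · linarith [this hs hr (by omega) (by omega)]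
  obtain ⟨d, rfl⟩ := Nat.exists_eq_add_of_le hrm
  obtain rfl : s = r + d + d := by omega
  have hdiff : ∀ j ∈ range d, logRootFact (r + d + (j + 1)) - logRootFact (r + d + j)
      ≤ logRootFact (r + (j + 1)) - logRootFact (r + j) := fun j _ =>
    antitoneOn_logRootFact_succ_sub (show 1 ≤ r + j by omega) (show 1 ≤ r + d + j by omega)
      (Nat.add_le_add_right (Nat.le_add_right r d) j)
  have := sum_le_sum hdiff
  rw [sum_range_sub (fun j => logRootFact (r + d + j)),
    sum_range_sub (fun j => logRootFact (r + j))] at this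
  rw [add_zero, add_zero] at this
  linarith

lemma sum_mul_log_sum_le {ι : Type*} (s : Finset ι) (t : ι → ℝ)
    (ht : ∀ i ∈ s, 0 ≤ t i) :
    (∑ i ∈ s, t i) * Real.log (∑ i ∈ s, t i)
      ≤ (∑ i ∈ s, t i) * Real.log #s + ∑ i ∈ s, t i * Real.log (t i) := by
  rcases s.eq_empty_or_nonempty with rfl | hs
  · simp
  set T := ∑ i ∈ s, t i
  have hn : (0 : ℝ) < #s := by exact_mod_cast hs.card_pos
  have hjensen := Real.convexOn_mul_log.map_sum_le (t := s) (w := fun _ => (#s : ℝ)⁻¹) (p := t)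
    (fun _ _ => by positivity) (by simp [hn.ne']) ht
  simp only [smul_eq_mul, ← mul_sum] at hjensen
  have hdiv : T * Real.log (T / #s) = T * Real.log T - T * Real.log #s := by
    rcases eq_or_ne T 0 with h | h
    · simp [h]
    · rw [Real.log_div h hn.ne']; ring
  have := mul_le_mul_of_nonneg_left hjensen hn.le
  rw [mul_inv_cancel_left₀ hn.ne', ← mul_assoc, mul_inv_cancel_left₀ hn.ne', inv_mul_eq_div,
    hdiv] at this
  linarith

section Matchings

variable {α β : Type*} [DecidableEq β]

def minor (S : α → Finset β) (i : α) (k : β) : {a // a ≠ i} → Finset {b // b ≠ k} :=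
  fun a => (S a).subtype (· ≠ k)

lemma card_minor (S : α → Finset β) (i : α) (k : β) (a : {a // a ≠ i}) :
    #(minor S i k a) = #((S a).erase k) := by
  rw [minor, card_subtype, filter_ne']

variable [DecidableEq α]

def equivRestrictNe (i : α) (k : β) :
    {e : α ≃ β // e i = k} ≃ ({a // a ≠ i} ≃ {b // b ≠ k}) :=
  (((Equiv.optionSubtypeNe i).equivCongr (Equiv.refl β)).symm.subtypeEquiv
    fun _ => Iff.rfl).trans (Equiv.optionSubtype k)

@[simp]
lemma coe_equivRestrictNe_apply (i : α) (k : β) (e : {e : α ≃ β // e i = k})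
    (a : {a // a ≠ i}) : (equivRestrictNe i k e a : β) = e.1 a := rfl

variable [Fintype α] [Fintype β]

/-- The perfect matchings of the bipartite graph joining `a` to `S a`; for a (0,1)-matrix with
rows `S a` these are the permutations that contribute to the permanent. -/
def matchings (S : α → Finset β) : Finset (α ≃ β) := {e | ∀ a, e a ∈ S a}

lemma mem_matchings {S : α → Finset β} {e : α ≃ β} :
    e ∈ matchings S ↔ ∀ a, e a ∈ S a := by
  simp [matchings]

lemma card_filter_matchings_apply_eq {S : α → Finset β} {i : α} {k : β} (hk : k ∈ S i) :
    #{e ∈ matchings S | e i = k} = #(matchings (minor S i k)) := by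
  have hmem : ∀ e : {e : α ≃ β // e i = k},
      (∀ a, e.1 a ∈ S a) ↔ ∀ a, equivRestrictNe i k e a ∈ minor S i k a := by
    intro e
    simp only [minor, mem_subtype, coe_equivRestrictNe_apply]
    refine ⟨fun h a => h a, fun h a => ?_⟩
    by_cases ha : a = i
    · rw [ha, e.2]; exact hk
    · exact h ⟨a, ha⟩
  calc #{e ∈ matchings S | e i = k}
      = Fintype.card {e : {e : α ≃ β // e i = k} // ∀ a, e.1 a ∈ S a} := by
        rw [Fintype.card_congr (Equiv.subtypeSubtypeEquivSubtypeInter (fun e : α ≃ β => e i = k)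
          (fun e => ∀ a, e a ∈ S a)), Fintype.card_subtype, matchings, filter_filter]
        simp only [and_comm]
    _ = Fintype.card {e : {a // a ≠ i} ≃ {b // b ≠ k} // ∀ a, e a ∈ minor S i k a} :=
        Fintype.card_congr ((equivRestrictNe i k).subtypeEquiv hmem)
    _ = #(matchings (minor S i k)) := Fintype.card_subtype _

lemma log_card_add_sum_logRootFact_card_erase {s : Finset β} {c : β} (hc : c ∈ s) :
    Real.log #s + (∑ b, logRootFact #(s.erase b) - logRootFact #(s.erase c))
      = Fintype.card β * logRootFact #s := by
  obtain ⟨r, hr⟩ := Nat.exists_eq_add_one_of_ne_zero (card_ne_zero_of_mem hc)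
  have hsplit : ∑ b, logRootFact #(s.erase b)
      = #s * logRootFact r + (Fintype.card β - #s) * logRootFact #s := by
    have hin : ∀ b ∈ s, logRootFact #(s.erase b) = logRootFact r := fun b hb => by
      rw [card_erase_of_mem hb, hr, Nat.add_sub_cancel]
    have hout : ∀ b ∈ sᶜ, logRootFact #(s.erase b) = logRootFact #s := fun b hb => by
      rw [erase_eq_of_notMem (mem_compl.mp hb)]
    rw [← sum_add_sum_compl s, sum_congr rfl hin, sum_congr rfl hout, sum_const, sum_const,
      card_compl, nsmul_eq_mul, nsmul_eq_mul, Nat.cast_sub (card_le_univ s)]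
  rw [hsplit, card_erase_of_mem hc, hr, Nat.add_sub_cancel]
  have h1 := natCast_mul_logRootFact r
  have h2 := natCast_mul_logRootFact (r + 1)
  rw [log_factorial_succ] at h2
  push_cast at h1 h2 ⊢
  linarith

/-- Schrijver's bound for a single row `i`: Jensen's inequality for `x log x` over the columns
that row `i` can be matched to, then the induction hypothesis on each minor. -/
lemma mul_log_card_matchings_le {S : α → Finset β}
    (ih : ∀ i, ∀ k ∈ S i,
      Real.log #(matchings (minor S i k)) ≤ ∑ a, logRootFact #(minor S i k a)) (i : α) :
    (#(matchings S) : ℝ) * Real.log #(matchings S)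
      ≤ #(matchings S) * Real.log #(S i) + ∑ e ∈ matchings S,
        (∑ a, logRootFact #((S a).erase (e i)) - logRootFact #((S i).erase (e i))) := by
  have hmaps : ∀ e ∈ matchings S, e i ∈ S i := fun e he => mem_matchings.mp he i
  set t : β → ℕ := fun k => #{e ∈ matchings S | e i = k}
  have hsum : ∑ k ∈ S i, (t k : ℝ) = #(matchings S) := by
    exact_mod_cast (card_eq_sum_card_fiberwise hmaps).symm
  have hfiber : ∑ k ∈ S i, (t k : ℝ) * Real.log (t k)
      = ∑ e ∈ matchings S, Real.log (t (e i)) := by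
    rw [← sum_fiberwise_of_maps_to hmaps]
    refine sum_congr rfl fun k _ => ?_
    rw [sum_congr rfl fun e he => by rw [(mem_filter.mp he).2], sum_const, nsmul_eq_mul]
  have hminor : ∀ e ∈ matchings S, Real.log (t (e i))
      ≤ ∑ a, logRootFact #((S a).erase (e i)) - logRootFact #((S i).erase (e i)) := by
    intro e he
    refine (card_filter_matchings_apply_eq (hmaps e he) ▸ ih i (e i) (hmaps e he)).trans_eq ?_
    simp_rw [card_minor]
    rw [← sum_erase_eq_sub (mem_univ i)]
    exact (sum_subtype (univ.erase i) (fun a => by simp)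
      fun a => logRootFact #((S a).erase (e i))).symm
  have hjensen := sum_mul_log_sum_le (S i) (fun k => (t k : ℝ)) (fun _ _ => by positivity)
  rw [hsum, hfiber] at hjensen
  linarith [sum_le_sum hminor]

lemma log_card_matchings_le_of_minors [Nonempty α] {S : α → Finset β}
    (ih : ∀ i, ∀ k ∈ S i,
      Real.log #(matchings (minor S i k)) ≤ ∑ a, logRootFact #(minor S i k a)) :
    Real.log #(matchings S) ≤ ∑ a, logRootFact #(S a) := by
  rcases (matchings S).eq_empty_or_nonempty with hM | ⟨e₀, he₀⟩
  · rw [hM, card_empty, Nat.cast_zero, Real.log_zero]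
    exact sum_nonneg fun a _ => logRootFact_nonneg _
  set p : ℝ := ((#(matchings S) : ℕ) : ℝ)
  have hp : 0 < p := Nat.cast_pos.mpr (card_pos.mpr ⟨e₀, he₀⟩)
  have hcard : Fintype.card α = Fintype.card β := Fintype.card_congr e₀
  have hn : (0 : ℝ) < Fintype.card β := by rw [← hcard]; exact_mod_cast Fintype.card_pos
  set F : α → β → ℝ := fun a b => logRootFact #((S a).erase b)
  -- `e` is a bijection, so summing over the rows `i ≠ a` is summing over the columns `b ≠ e a`.
  have hcolumns : ∀ e : α ≃ β,
      ∑ i, (∑ a, F a (e i) - F i (e i)) = ∑ a, (∑ b, F a b - F a (e a)) := fun e => by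
    rw [sum_sub_distrib, sum_comm, sum_sub_distrib]
    exact congrArg (· - _) (sum_congr rfl fun a _ => e.sum_comp (F a))
  have hrhs : ∑ i, (p * Real.log #(S i) + ∑ e ∈ matchings S, (∑ a, F a (e i) - F i (e i)))
      = p * (Fintype.card β * ∑ a, logRootFact #(S a)) := calc
    _ = ∑ e ∈ matchings S, ∑ a, (Real.log #(S a) + (∑ b, F a b - F a (e a))) := by
      simp only [sum_add_distrib, ← mul_sum, sum_const, nsmul_eq_mul]
      rw [sum_comm]
      simp only [hcolumns]
      rfl
    _ = ∑ e ∈ matchings S, ∑ a, Fintype.card β * logRootFact #(S a) :=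
      sum_congr rfl fun e he => sum_congr rfl fun a _ =>
        log_card_add_sum_logRootFact_card_erase (mem_matchings.mp he a)
    _ = p * (Fintype.card β * ∑ a, logRootFact #(S a)) := by
      rw [sum_const, nsmul_eq_mul, ← mul_sum]
  have htotal := sum_le_sum fun i (_ : i ∈ univ) => mul_log_card_matchings_le ih i
  rw [sum_const, Finset.card_univ, hcard, nsmul_eq_mul, hrhs, mul_left_comm] at htotal
  exact (mul_le_mul_iff_right₀ hn).mp ((mul_le_mul_iff_right₀ hp).mp htotal)

/-- Bregman's theorem (Minc's conjecture), in logarithmic form. -/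
theorem log_card_matchings_le (S : α → Finset β) :
    Real.log #(matchings S) ≤ ∑ a, logRootFact #(S a) := by
  induction h : Fintype.card α generalizing α β with
  | zero =>
    have : IsEmpty α := Fintype.card_eq_zero_iff.mp h
    have hle : #(matchings S) ≤ 1 := card_le_one.mpr fun e _ f _ => Equiv.ext isEmptyElim
    rw [univ_eq_empty, sum_empty]
    exact Real.log_nonpos (Nat.cast_nonneg _) (by exact_mod_cast hle)
  | succ n ih =>
    have : Nonempty α := Fintype.card_pos_iff.mp (h ▸ n.succ_pos)
    refine log_card_matchings_le_of_minors fun i k _ => ih _ ?_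
    have := Fintype.card_congr (Equiv.optionSubtypeNe i)
    rw [Fintype.card_option, h] at this
    omega

lemma card_matchings_mul_card_matchings_compl_le {m : ℕ} (hβ : Fintype.card β = m + m)
    (S : α → Finset β) : #(matchings S) * #(matchings fun a => (S a)ᶜ) ≤ m ! ^ 4 := by
  rcases (matchings S).eq_empty_or_nonempty with h | ⟨e, he⟩
  · simp [h]
  rcases (matchings fun a => (S a)ᶜ).eq_empty_or_nonempty with h | ⟨f, hf⟩
  · simp [h]
  have hp := card_pos.mpr ⟨e, he⟩
  have hq := card_pos.mpr ⟨f, hf⟩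
  have hα : Fintype.card α = m + m := (Fintype.card_congr e).trans hβ
  have hrow : ∀ a, logRootFact #(S a) + logRootFact #(S a)ᶜ ≤ 2 * logRootFact m := fun a =>
    logRootFact_add_logRootFact_le (card_pos.mpr ⟨e a, mem_matchings.mp he a⟩)
      (card_pos.mpr ⟨f a, mem_matchings.mp hf a⟩)
      (by rw [card_compl, hβ]; have := card_le_univ (S a); omega)
  have hlog : Real.log (#(matchings S) * #(matchings fun a => (S a)ᶜ) : ℕ)
      ≤ Real.log (m ! ^ 4 : ℕ) := by
    rw [Nat.cast_mul, Real.log_mul (by positivity) (by positivity), Nat.cast_pow, Real.log_pow]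
    calc _ ≤ ∑ a, (logRootFact #(S a) + logRootFact #(S a)ᶜ) := by
          rw [sum_add_distrib]
          exact add_le_add (log_card_matchings_le S) (log_card_matchings_le _)
      _ ≤ ∑ _a : α, 2 * logRootFact m := sum_le_sum fun a _ => hrow a
      _ = _ := by
          rw [sum_const, Finset.card_univ, hα, nsmul_eq_mul, ← natCast_mul_logRootFact]
          push_cast
          ring
  exact_mod_cast (Real.log_le_log_iff (by positivity) (by positivity)).mp hlog

end Matchings

lemma card_matchings_eq_card_stabilizer {α ι : Type*} [Fintype α] [DecidableEq α]
    [DecidableEq ι] (f : α → ι) :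
    #(matchings fun a => ({b | f b = f a} : Finset α))
      = Fintype.card {g : Equiv.Perm α // f ∘ g = f} := by
  rw [Fintype.card_subtype, matchings]
  congr 1 with g
  simp [funext_iff]

lemma perm_eq_card_matchings {n : ℕ} {M : Matrix (Fin n) (Fin n) ℤ}
    (hM : ∀ i j, M i j = 0 ∨ M i j = 1) : perm M = #(matchings fun i => {j | M i j = 1}) := by
  rw [perm, matchings, natCast_card_filter]
  refine sum_congr rfl fun σ _ => ?_
  split_ifs with h
  · exact prod_eq_one fun i _ => by simpa using h i
  · obtain ⟨i, hi⟩ := not_forall.mp h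
    exact prod_eq_zero (mem_univ i) ((hM i (σ i)).resolve_right (by simpa using hi))

lemma perm_jmat_sub_eq_card_matchings_compl {n : ℕ} {B : Matrix (Fin n) (Fin n) ℤ}
    (hB : ∀ i j, B i j = 0 ∨ B i j = 1) :
    perm (Jmat n - B) = #(matchings fun i => ({j | B i j = 1} : Finset (Fin n))ᶜ) := by
  rw [perm_eq_card_matchings fun i j => by rcases hB i j with h | h <;> simp [Jmat, h]]
  congr 3 with i j
  rcases hB i j with h | h <;> simp [Jmat, h]

lemma perm_mul_perm_jmat_sub_le {m : ℕ} {B : Matrix (Fin (m + m)) (Fin (m + m)) ℤ}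
    (hB : ∀ i j, B i j = 0 ∨ B i j = 1) :
    perm B * perm (Jmat (m + m) - B) ≤ (m ! : ℤ) ^ 4 := by
  rw [perm_eq_card_matchings hB, perm_jmat_sub_eq_card_matchings_compl hB]
  exact_mod_cast card_matchings_mul_card_matchings_compl_le (Fintype.card_fin _) _

lemma exists_perm_mul_perm_jmat_sub_eq (m : ℕ) :
    ∃ B : Matrix (Fin (m + m)) (Fin (m + m)) ℤ, (∀ i j, B i j = 0 ∨ B i j = 1) ∧
      perm B * perm (Jmat (m + m) - B) = (m ! : ℤ) ^ 4 := by
  set f : Fin (m + m) → Bool := fun j => decide ((j : ℕ) < m)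
  have hrev : ∀ j, f (Fin.rev j) = !f j := fun j => by
    simp only [f, Fin.val_rev]
    by_cases h : (j : ℕ) < m <;> simp [h] <;> omega
  set S : Fin (m + m) → Finset (Fin (m + m)) := fun i => {j | f j = f i}
  set B : Matrix (Fin (m + m)) (Fin (m + m)) ℤ := Matrix.of fun i j => if f j = f i then 1 else 0
  have hB : ∀ i j, B i j = 0 ∨ B i j = 1 := fun i j => by
    by_cases h : f j = f i <;> simp [B, h]
  have hBS : ∀ i, ({j | B i j = 1} : Finset _) = S i := fun i => by
    ext j; by_cases h : f j = f i <;> simp [B, S, h]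
  have hcompl : #(matchings fun i => (S i)ᶜ) = #(matchings S) :=
    card_equiv ((Equiv.refl _).equivCongr Fin.revPerm) fun e => by
      simp [mem_matchings, S, hrev, Bool.eq_not]
  have htrue : Fintype.card {a // f a = true} = m := by
    rw [Fintype.card_subtype]
    simpa [f] using Fin.card_filter_val_lt (n := m + m) (m := m)
  have hfalse : Fintype.card {a // f a = false} = m :=
    (Fintype.card_congr (Fin.revPerm.subtypeEquiv fun a => by simp [hrev])).trans htrue
  refine ⟨B, hB, ?_⟩
  rw [perm_eq_card_matchings hB, perm_jmat_sub_eq_card_matchings_compl hB]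
  simp only [hBS]
  rw [hcompl, card_matchings_eq_card_stabilizer, DomMulAct.stabilizer_card, Fintype.prod_bool,
    htrue, hfalse]
  push_cast
  ring

theorem stmt_11_general (n : ℕ) (hne : Even n) :
    (∀ B : Matrix (Fin n) (Fin n) ℤ, (∀ i j, B i j = 0 ∨ B i j = 1) →
      perm B * perm (Jmat n - B) ≤ ((n / 2)! : ℤ) ^ 4) ∧
    (∃ B : Matrix (Fin n) (Fin n) ℤ, (∀ i j, B i j = 0 ∨ B i j = 1) ∧
      perm B * perm (Jmat n - B) = ((n / 2)! : ℤ) ^ 4) := by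
  obtain ⟨m, rfl⟩ := hne
  rw [show (m + m) / 2 = m by omega]
  exact ⟨fun B hB => perm_mul_perm_jmat_sub_le hB, exists_perm_mul_perm_jmat_sub_eq m⟩

/-- For even `n > 0`, every `n×n` (0,1)-matrix `B` satisfies
`per(B)·per(Jₙ - B) ≤ ((n/2)!)⁴`, and this bound is attained; i.e. the maximal number of
directed 2-factors of a bipartite tournament obtained by orienting `K_{n,n}` is `((n/2)!)⁴`. -/
theorem stmt_11 (n : ℕ) (hn : 0 < n) (hne : Even n) :
    (∀ B : Matrix (Fin n) (Fin n) ℤ, (∀ i j, B i j = 0 ∨ B i j = 1) →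
      perm B * perm (Jmat n - B) ≤ ((n / 2)! : ℤ) ^ 4) ∧
    (∃ B : Matrix (Fin n) (Fin n) ℤ, (∀ i j, B i j = 0 ∨ B i j = 1) ∧
      perm B * perm (Jmat n - B) = ((n / 2)! : ℤ) ^ 4) :=
  stmt_11_general n hne
end

section
/- Let p ≥ 1 be an integer, set n = 2p + 1, and let B be the n×n (0,1)-matrix B = J_p ⊕ J_p ⊕ J_1 (block-diagonal with two p×p all-ones blocks and a 1×1 all-ones block). Then per(B) · per(J_n − B) = 2p · (p!)⁴. -/
open Nat Matrix

/-!
`per B` counts the permutations preserving the three diagonal blocks, `(p!)² · 1!`, while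
`per (Jₙ - B)` counts those moving every index out of its block. For the latter, delete the
`1×1` block `c` from the cycle of such a permutation `σ`: this leaves a permutation `τ` of the
two `p`-blocks that swaps them everywhere except possibly at `σ⁻¹ c`, and since both blocks
have size `p` it then swaps them there as well. Conversely `σ` is recovered from `τ` and
`σ c`, which may be any of the `2p` other indices, so `per (Jₙ - B) = 2p · (p!)²`.
-/

open Equiv

theorem perm_of_indicator {n : ℕ} (R : Fin n → Fin n → Prop) [∀ i j, Decidable (R i j)] :
    perm (of fun i j => if R i j then (1 : ℤ) else 0) =
      Fintype.card {σ : Perm (Fin n) // ∀ i, R i (σ i)} := by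
  simp only [perm, of_apply, Finset.prod_boole, Finset.mem_univ, true_implies,
    Finset.sum_boole, Fintype.card_subtype]

theorem Jmat_sub_of_indicator {n : ℕ} (R : Fin n → Fin n → Prop) [∀ i j, Decidable (R i j)] :
    Jmat n - of (fun i j => if R i j then (1 : ℤ) else 0) =
      of fun i j => if ¬ R i j then 1 else 0 := by
  ext i j
  by_cases h : R i j <;> simp [Jmat, h]

theorem card_perm_forall_congr {α β : Type*} [Fintype α] [DecidableEq α] [Fintype β]
    [DecidableEq β] (e : α ≃ β) (R : β → β → Prop)
    [DecidablePred fun τ : Perm β => ∀ y, R y (τ y)]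
    [DecidablePred fun σ : Perm α => ∀ x, R (e x) (e (σ x))] :
    Fintype.card {τ : Perm β // ∀ y, R y (τ y)} =
      Fintype.card {σ : Perm α // ∀ x, R (e x) (e (σ x))} :=
  Fintype.card_congr <| (subtypeEquiv (permCongr e) fun σ => by
    simp only [permCongr_apply, ← e.forall_congr_right (q := fun y => R y (e (σ (e.symm y)))),
      symm_apply_apply]).symm

section PermOption

variable {β γ : Type*} [DecidableEq β]

theorem forall_map_decomposeOption_symm_ne_iff (f : β → γ) (x : Option β) (τ : Perm β) :
    (∀ y, (Perm.decomposeOption.symm (x, τ) y).map f ≠ y.map f) ↔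
      ∃ b, x = some b ∧ ∀ y, τ y ≠ b → f (τ y) ≠ f y := by
  simp only [Perm.decomposeOption_symm_apply, Perm.coe_mul, Function.comp_apply,
    optionCongr_apply]
  constructor
  · intro h
    obtain _ | b := x
    · simpa using h none
    refine ⟨b, rfl, fun y hy => ?_⟩
    simpa [swap_apply_of_ne_of_ne, hy] using h (some y)
  · rintro ⟨b, rfl, h⟩ (_ | y)
    · simp
    · by_cases hy : τ y = b
      · simp [hy]
      · simpa [swap_apply_of_ne_of_ne, hy] using h y hy

theorem card_perm_option_map_ne [Fintype β] [DecidableEq γ] (f : β → γ) :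
    Fintype.card {σ : Perm (Option β) // ∀ x, (σ x).map f ≠ x.map f} =
      ∑ b, Fintype.card {τ : Perm β // ∀ x, τ x ≠ b → f (τ x) ≠ f x} := by
  let e : (Σ b, {τ : Perm β // ∀ x, τ x ≠ b → f (τ x) ≠ f x}) →
      {σ : Perm (Option β) // ∀ x, (σ x).map f ≠ x.map f} := fun q =>
    ⟨Perm.decomposeOption.symm (some q.1, q.2.1),
      (forall_map_decomposeOption_symm_ne_iff f _ _).2 ⟨q.1, rfl, q.2.2⟩⟩
  have he : Function.Bijective e := by
    constructor
    · rintro ⟨b, τ, _⟩ ⟨b', τ', _⟩ h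
      have := Perm.decomposeOption.symm.injective (congrArg Subtype.val h)
      simp only [Prod.mk.injEq, Option.some_inj] at this
      obtain ⟨rfl, rfl⟩ := this
      rfl
    · rintro ⟨σ, hσ⟩
      obtain ⟨b, hb, hτ⟩ := (forall_map_decomposeOption_symm_ne_iff f _ _).1
        (by simpa only [Prod.mk.eta, symm_apply_apply] using hσ :
          ∀ y, (Perm.decomposeOption.symm (Perm.decomposeOption σ) y).map f ≠ y.map f)
      refine ⟨⟨b, _, hτ⟩, Subtype.ext ?_⟩
      simp only [e, ← hb]
      exact Perm.decomposeOption.symm_apply_apply σ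
  rw [← Fintype.card_sigma, Fintype.card_congr (Equiv.ofBijective e he)]

end PermOption

section TwoBlocks

variable {β : Type*} [Fintype β] [DecidableEq β]

/-- The exceptional point `τ⁻¹ b` is forced to change blocks too: `τ` maps the block not
containing it into the other one, and the two blocks have the same size. -/
theorem forall_ne_imp_apply_ne_iff_of_card_eq (f : β → Bool)
    (hf : Fintype.card {x // f x = true} = Fintype.card {x // f x = false})
    (τ : Perm β) (b : β) :
    (∀ x, τ x ≠ b → f (τ x) ≠ f x) ↔ ∀ x, f (τ x) ≠ f x := by
  refine ⟨fun h x => ?_, fun h x _ => h x⟩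
  rcases ne_or_eq (τ x) b with hx | rfl
  · exact h x hx
  set other := Finset.univ.filter fun y => f y = !f x
  set same := Finset.univ.filter fun y => f y = f x
  have hmaps : other.image τ ⊆ same := by
    simp only [Finset.subset_iff, Finset.mem_image, Finset.mem_filter, Finset.mem_univ, true_and,
      other, same, forall_exists_index, and_imp]
    rintro _ y hy rfl
    have hyx : y ≠ x := by rintro rfl; simp at hy
    have := h y (τ.injective.ne hyx)
    revert this hy; cases f x <;> cases f y <;> cases f (τ y) <;> simp
  have hcard : same.card ≤ (other.image τ).card := by
    rw [Finset.card_image_of_injective _ τ.injective]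
    simp only [same, other, ← Fintype.card_subtype]
    cases f x <;> simp [hf]
  intro hfx
  have : τ x ∈ other.image τ := by
    rw [Finset.eq_of_subset_of_card_le hmaps hcard]
    simpa [same] using hfx
  obtain ⟨y, hy, hyx⟩ := Finset.mem_image.1 this
  rw [τ.injective hyx] at hy
  simp [other] at hy

theorem card_perm_apply_ne_eq_card_stabilizer (f : β → Bool) (w : Perm β)
    (hw : ∀ x, f (w x) ≠ f x) :
    Fintype.card {τ : Perm β // ∀ x, f (τ x) ≠ f x} =
      Fintype.card {ρ : Perm β // f ∘ ρ = f} :=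
  Fintype.card_congr <| subtypeEquiv (Equiv.mulLeft w) fun τ => by
    simp only [funext_iff, Function.comp_apply, coe_mulLeft, Perm.coe_mul]
    refine forall_congr' fun x => ?_
    have := hw (τ x)
    revert this; cases f x <;> cases f (τ x) <;> cases f (w (τ x)) <;> simp

end TwoBlocks

section Blocks

variable (p : ℕ)

theorem card_subtype_fst_eq (b : Bool) : Fintype.card {a : Bool × Fin p // a.1 = b} = p := by
  rw [Fintype.card_subtype, Finset.card_filter]
  cases b <;> simp only [Fintype.sum_prod_type, Fintype.sum_bool] <;> simp

theorem card_subtype_map_fst_eq (b : Option Bool) :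
    Fintype.card {a : Option (Bool × Fin p) // a.map Prod.fst = b} =
      if b = none then 1 else p := by
  rw [Fintype.card_subtype, Finset.card_filter]
  rcases b with _ | _ | _ <;>
    simp only [Fintype.sum_option, Fintype.sum_prod_type, Fintype.sum_bool] <;> simp

theorem card_perm_map_fst_comp_eq :
    Fintype.card {σ : Perm (Option (Bool × Fin p)) //
      Option.map Prod.fst ∘ σ = Option.map Prod.fst} = p ! ^ 2 := by
  simp [DomMulAct.stabilizer_card, Fintype.prod_option, card_subtype_map_fst_eq]

theorem card_perm_fst_ne :
    Fintype.card {τ : Perm (Bool × Fin p) // ∀ x, (τ x).1 ≠ x.1} = p ! ^ 2 := by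
  rw [card_perm_apply_ne_eq_card_stabilizer Prod.fst (prodCongrLeft fun _ => boolNot)
    (by simp), DomMulAct.stabilizer_card]
  simp [card_subtype_fst_eq]

theorem card_perm_map_fst_ne :
    Fintype.card {σ : Perm (Option (Bool × Fin p)) //
      ∀ x, (σ x).map Prod.fst ≠ x.map Prod.fst} = 2 * p * p ! ^ 2 := by
  have hbal := (card_subtype_fst_eq p true).trans (card_subtype_fst_eq p false).symm
  simp only [card_perm_option_map_ne,
    forall_ne_imp_apply_ne_iff_of_card_eq Prod.fst hbal, card_perm_fst_ne]
  simp

/-- Indices of the blocks of `B`: `some (false, j) ↦ j`, `some (true, j) ↦ p + j`,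
`none ↦ 2p`. -/
def blockIndex : Option (Bool × Fin p) ≃ Fin (2 * p + 1) :=
  (optionCongr ((finTwoEquiv.symm.prodCongr (Equiv.refl _)).trans finProdFinEquiv)).trans
    finSuccEquivLast.symm

def SameBlock (i j : Fin (2 * p + 1)) : Prop :=
  ((i : ℕ) < p ∧ (j : ℕ) < p) ∨
    (p ≤ (i : ℕ) ∧ (i : ℕ) < 2 * p ∧ p ≤ (j : ℕ) ∧ (j : ℕ) < 2 * p) ∨
    ((i : ℕ) = 2 * p ∧ (j : ℕ) = 2 * p)

instance : DecidableRel (SameBlock p) := fun _ _ => by unfold SameBlock; infer_instance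

theorem sameBlock_blockIndex_iff (x y : Option (Bool × Fin p)) :
    SameBlock p (blockIndex p x) (blockIndex p y) ↔ x.map Prod.fst = y.map Prod.fst := by
  rcases x with _ | ⟨_ | _, i⟩ <;> rcases y with _ | ⟨_ | _, j⟩ <;>
    simp [SameBlock, blockIndex, finTwoEquiv] <;> omega

theorem card_perm_sameBlock :
    Fintype.card {σ : Perm (Fin (2 * p + 1)) // ∀ i, SameBlock p i (σ i)} = p ! ^ 2 := by
  rw [card_perm_forall_congr (blockIndex p), ← card_perm_map_fst_comp_eq]
  refine Fintype.card_congr <| subtypeEquivRight fun σ => ?_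
  simp [sameBlock_blockIndex_iff, funext_iff, eq_comm]

theorem card_perm_not_sameBlock :
    Fintype.card {σ : Perm (Fin (2 * p + 1)) // ∀ i, ¬ SameBlock p i (σ i)} =
      2 * p * p ! ^ 2 := by
  rw [card_perm_forall_congr (blockIndex p) fun i j => ¬ SameBlock p i j, ← card_perm_map_fst_ne]
  refine Fintype.card_congr <| subtypeEquivRight fun σ => ?_
  simp [sameBlock_blockIndex_iff, eq_comm]

end Blocks

theorem stmt_13_general (p : ℕ) (B : Matrix (Fin (2 * p + 1)) (Fin (2 * p + 1)) ℤ)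
    (hB : B = Matrix.of (fun i j : Fin (2 * p + 1) =>
      if ((i : ℕ) < p ∧ (j : ℕ) < p) ∨
          (p ≤ (i : ℕ) ∧ (i : ℕ) < 2 * p ∧ p ≤ (j : ℕ) ∧ (j : ℕ) < 2 * p) ∨
          ((i : ℕ) = 2 * p ∧ (j : ℕ) = 2 * p) then (1 : ℤ) else 0)) :
    perm B * perm (Jmat (2 * p + 1) - B) = 2 * p * (p ! : ℤ) ^ 4 := by
  have hB' : B = of fun i j => if SameBlock p i j then (1 : ℤ) else 0 := hB
  rw [hB', Jmat_sub_of_indicator, perm_of_indicator, perm_of_indicator, card_perm_sameBlock,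
    card_perm_not_sameBlock]
  push_cast
  ring

/-- For `p ≥ 1`, `n = 2p+1` and `B = J_p ⊕ J_p ⊕ J_1` (block diagonal), one has
`per(B)·per(Jₙ - B) = 2p·(p!)⁴`. -/
theorem stmt_13 (p : ℕ) (hp : 1 ≤ p) (B : Matrix (Fin (2 * p + 1)) (Fin (2 * p + 1)) ℤ)
    (hB : B = Matrix.of (fun i j : Fin (2 * p + 1) =>
      if ((i : ℕ) < p ∧ (j : ℕ) < p) ∨
          (p ≤ (i : ℕ) ∧ (i : ℕ) < 2 * p ∧ p ≤ (j : ℕ) ∧ (j : ℕ) < 2 * p) ∨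
          ((i : ℕ) = 2 * p ∧ (j : ℕ) = 2 * p) then (1 : ℤ) else 0)) :
    perm B * perm (Jmat (2 * p + 1) - B) = 2 * p * (p ! : ℤ) ^ 4 :=
  stmt_13_general p B hB
end
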